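/- In the setting of the previous semi-orthogonal decomposition lemma: if C₁ and C₂ are idempotent complete full stable subcategories of a stable category C with Hom_C(C₁, C₂) = 0, then the smallest full stable subcategory C° = ⟨C₁, C₂⟩ containing both is also idempotent complete. -/

import Mathlib

open CategoryTheory Limits Pretriangulated

universe v u

variable {C : Type u} [Category.{v} C] [Preadditive C] [HasZeroObject C] [HasShift C ℤ]
  [∀ n : ℤ, (CategoryTheory.shiftFunctor C n).Additive] [Pretriangulated C]

/-- A class of objects is a (full) stable subcategory if it is closed under isomorphisms,
zero objects, shifts, and cones of distinguished triangles. -/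
structure IsStableSub (P : C → Prop) : Prop where
  iso_closed : ∀ ⦃X Y : C⦄, (X ≅ Y) → P X → P Y
  zero_mem : ∀ X : C, IsZero X → P X
  shift_closed : ∀ (X : C) (n : ℤ), P X → P (X⟦n⟧)
  cone_closed : ∀ T ∈ distTriang C, P (Triangle.obj₁ T) → P (Triangle.obj₂ T) →
    P (Triangle.obj₃ T)

/-- The smallest full stable subcategory of `C` containing `C₁` and `C₂`. -/
def StableSpan (C₁ C₂ : C → Prop) : C → Prop := fun X =>
  ∀ P : C → Prop,
    (∀ Y, C₁ Y → P Y) → (∀ Y, C₂ Y → P Y) →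
    (∀ ⦃Y Z : C⦄, (Y ≅ Z) → P Y → P Z) →
    (∀ Y : C, IsZero Y → P Y) →
    (∀ (Y : C) (n : ℤ), P Y → P (Y⟦n⟧)) →
    (∀ T ∈ distTriang C, P (Triangle.obj₁ T) → P (Triangle.obj₂ T) → P (Triangle.obj₃ T)) →
    P X

/-- A full subcategory `P` of `C` is idempotent complete if every idempotent endomorphism of
an object of `P` splits through an object of `P`. -/
def IdemCompleteSub (P : C → Prop) : Prop :=
  ∀ ⦃X : C⦄, P X → ∀ e : X ⟶ X, e ≫ e = e →
    ∃ (Y : C) (_ : P Y) (r : X ⟶ Y) (s : Y ⟶ X), r ≫ s = e ∧ s ≫ r = 𝟙 Y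

/-!
Because `Hom(C₁, C₂) = 0`, the objects `X` admitting a distinguished triangle
`X₁ ⟶ X ⟶ X₂ ⟶ X₁⟦1⟧` with `X₁ ∈ C₁` and `X₂ ∈ C₂` (Mathlib's `extensionProduct C₁ C₂`) form a
triangulated subcategory, hence exhaust `⟨C₁, C₂⟩`. Closure under cones is proved without the
octahedral axiom: the decompositions of the source and target of a map induce maps between their
`C₁`- and `C₂`-parts, with cones `Z₁ ∈ C₁` and `Z₂ ∈ C₂`, and comparison maps `Z₁ ⟶ X'' ⟶ Z₂`
to the cone `X''`. By the five lemma the first is a colocalization for the left orthogonal of `C₂`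
and the second a localization for the right orthogonal of `C₁`, which identifies the cone of
`Z₁ ⟶ X''` with `Z₂`.

By orthogonality an idempotent `e` of such an `X` extends to an idempotent endomorphism of the
triangle. Splitting its outer components through `Y₁ ∈ C₁`, `Y₂ ∈ C₂` and completing to a triangle
`Y₁ ⟶ Y ⟶ Y₂` gives `r : X ⟶ Y` and `s : Y ⟶ X` with `s ≫ e ≫ r` unipotent. Correcting `r` by
its inverse yields an idempotent `p` below `e` that splits through `Y` and agrees with `e` along the
triangle, so `e - p` is an idempotent of square zero and `p = e`.
-/

open Category ObjectProperty ZeroObject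

namespace CategoryTheory.Pretriangulated.Triangle

lemma comp_eq_zero_of_comp_mor₂_of_mor₁_comp {T : Triangle C} (hT : T ∈ distTriang C)
    {X Y : C} {x : X ⟶ T.obj₂} {y : T.obj₂ ⟶ Y} (hx : x ≫ T.mor₂ = 0) (hy : T.mor₁ ≫ y = 0) :
    x ≫ y = 0 := by
  obtain ⟨x', rfl⟩ := coyoneda_exact₂ T hT x hx
  rw [assoc, hy, comp_zero]

lemma isIso_of_mor₁_comp_eq_of_comp_mor₂_eq {T : Triangle C} (hT : T ∈ distTriang C)
    {x : T.obj₂ ⟶ T.obj₂} (h₁ : T.mor₁ ≫ x = T.mor₁) (h₂ : x ≫ T.mor₂ = T.mor₂) : IsIso x := by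
  obtain ⟨n, rfl⟩ : ∃ n, x = 𝟙 _ + n := ⟨x - 𝟙 _, by abel⟩
  have hn : n ≫ n = 0 :=
    comp_eq_zero_of_comp_mor₂_of_mor₁_comp hT (by simpa using h₂) (by simpa using h₁)
  exact ⟨𝟙 _ - n, by simp [hn], by simp [hn]⟩

lemma idempotent_eq_of_mor₁_comp_eq_of_comp_mor₂_eq {T : Triangle C} (hT : T ∈ distTriang C)
    {e p : T.obj₂ ⟶ T.obj₂} (he : e ≫ e = e) (hp : p ≫ p = p) (hep : e ≫ p = p)
    (hpe : p ≫ e = p) (h₁ : T.mor₁ ≫ p = T.mor₁ ≫ e) (h₂ : p ≫ T.mor₂ = e ≫ T.mor₂) :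
    p = e := by
  have hsq : (e - p) ≫ (e - p) = 0 :=
    comp_eq_zero_of_comp_mor₂_of_mor₁_comp hT (by simp [h₂]) (by simp [h₁])
  have hidem : (e - p) ≫ (e - p) = e - p := by simp [he, hp, hep, hpe]
  exact (sub_eq_zero.1 (hidem.symm.trans hsq)).symm

-- The five lemma for `Hom(X, -)`, and below for `Hom(-, X)`, with the minimal hypotheses.
lemma bijective_comp_hom₃ {T T' : Triangle C} (φ : T ⟶ T') (hT : T ∈ distTriang C)
    (hT' : T' ∈ distTriang C) (X : C)
    (h₁ : Function.Surjective (fun f : X ⟶ T.obj₁ => f ≫ φ.hom₁))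
    (h₂ : Function.Bijective (fun f : X ⟶ T.obj₂ => f ≫ φ.hom₂))
    (h₁' : Function.Bijective (fun f : X ⟶ T.obj₁⟦(1 : ℤ)⟧ => f ≫ φ.hom₁⟦1⟧'))
    (h₂' : Function.Injective (fun f : X ⟶ T.obj₂⟦(1 : ℤ)⟧ => f ≫ φ.hom₂⟦1⟧')) :
    Function.Bijective (fun f : X ⟶ T.obj₃ => f ≫ φ.hom₃) := by
  refine ⟨(injective_iff_map_eq_zero (Preadditive.rightComp X φ.hom₃)).2 fun z hz => ?_,
    fun z' => ?_⟩
  · change z ≫ φ.hom₃ = 0 at hz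
    have hz₃ : z ≫ T.mor₃ = 0 := h₁'.1 (by simp [reassoc_of% hz])
    obtain ⟨y, rfl⟩ := coyoneda_exact₃ T hT z hz₃
    obtain ⟨x', hx'⟩ := coyoneda_exact₂ T' hT' (y ≫ φ.hom₂) (by simpa using hz)
    obtain ⟨x, rfl⟩ := h₁ x'
    have hy : y = x ≫ T.mor₁ := h₂.1 (by simpa using hx')
    simp [hy, comp_distTriang_mor_zero₁₂ _ hT]
  · obtain ⟨u, hu⟩ := h₁'.2 (z' ≫ T'.mor₃)
    dsimp only at hu
    have hu₁ : u ≫ T.mor₁⟦1⟧' = 0 := h₂' <| by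
      dsimp only
      rw [assoc, ← Functor.map_comp, φ.comm₁, Functor.map_comp, reassoc_of% hu,
        comp_distTriang_mor_zero₃₁ _ hT', comp_zero, zero_comp]
    obtain ⟨z, rfl⟩ := coyoneda_exact₁ T hT u hu₁
    obtain ⟨y', hy'⟩ := coyoneda_exact₃ T' hT' (z' - z ≫ φ.hom₃) (by simp [← hu])
    obtain ⟨y, rfl⟩ := h₂.2 y'
    rw [sub_eq_iff_eq_add'] at hy'
    exact ⟨z + y ≫ T.mor₂, by simp [hy']⟩

lemma bijective_hom₃_comp {T T' : Triangle C} (φ : T ⟶ T') (hT : T ∈ distTriang C)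
    (hT' : T' ∈ distTriang C) (X : C)
    (h₁ : Function.Injective (fun f : T'.obj₁ ⟶ X => φ.hom₁ ≫ f))
    (h₂ : Function.Bijective (fun f : T'.obj₂ ⟶ X => φ.hom₂ ≫ f))
    (h₁' : Function.Bijective (fun f : T'.obj₁⟦(1 : ℤ)⟧ ⟶ X => φ.hom₁⟦1⟧' ≫ f))
    (h₂' : Function.Surjective (fun f : T'.obj₂⟦(1 : ℤ)⟧ ⟶ X => φ.hom₂⟦1⟧' ≫ f)) :
    Function.Bijective (fun f : T'.obj₃ ⟶ X => φ.hom₃ ≫ f) := by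
  refine ⟨(injective_iff_map_eq_zero (Preadditive.leftComp X φ.hom₃)).2 fun ρ hρ => ?_,
    fun z => ?_⟩
  · change φ.hom₃ ≫ ρ = 0 at hρ
    have hρ₂ : T'.mor₂ ≫ ρ = 0 := h₂.1 (by simp [← φ.comm₂_assoc, hρ])
    obtain ⟨ρ', rfl⟩ := yoneda_exact₃ T' hT' ρ hρ₂
    obtain ⟨σ, hσ⟩ := yoneda_exact₃ _ (rot_of_distTriang _ hT) (φ.hom₁⟦1⟧' ≫ ρ')
      ((φ.comm₃_assoc ρ').trans hρ)
    obtain ⟨σ', hσ'⟩ := h₂' (-σ)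
    have hρ' : ρ' = T'.mor₁⟦1⟧' ≫ σ' := h₁'.1 <| by
      dsimp only at hσ' ⊢
      refine hσ.trans ?_
      rw [← Functor.map_comp_assoc, ← φ.comm₁, Functor.map_comp, assoc, hσ']
      exact (Preadditive.neg_comp _ _).trans (Preadditive.comp_neg _ _).symm
    simp [hρ', comp_distTriang_mor_zero₃₁_assoc _ hT']
  · obtain ⟨β, hβ⟩ := h₂.2 (T.mor₂ ≫ z)
    dsimp only at hβ
    have hβ₁ : T'.mor₁ ≫ β = 0 := h₁ <| by
      dsimp only
      rw [← φ.comm₁_assoc, hβ, comp_distTriang_mor_zero₁₂_assoc _ hT, zero_comp, comp_zero]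
    obtain ⟨ρ, rfl⟩ := yoneda_exact₂ T' hT' β hβ₁
    obtain ⟨y', hy'⟩ := yoneda_exact₃ T hT (z - φ.hom₃ ≫ ρ) (by simp [← hβ])
    obtain ⟨y, rfl⟩ := h₁'.2 y'
    rw [sub_eq_iff_eq_add'] at hy'
    exact ⟨ρ + T'.mor₃ ≫ y, by simp [hy']⟩

lemma eq_zero_of_surjective_comp_mor₁ {T : Triangle C} (hT : T ∈ distTriang C) {X : C}
    (h₁ : Function.Surjective (fun f : X ⟶ T.obj₁ => f ≫ T.mor₁))
    (h₁' : Function.Injective (fun f : X ⟶ T.obj₁⟦(1 : ℤ)⟧ => f ≫ T.mor₁⟦1⟧'))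
    (y : X ⟶ T.obj₃) : y = 0 := by
  have hy : y ≫ T.mor₃ = 0 := h₁' (by simp [comp_distTriang_mor_zero₃₁ _ hT])
  obtain ⟨y', rfl⟩ := coyoneda_exact₃ T hT y hy
  obtain ⟨y'', rfl⟩ := h₁ y'
  simp [comp_distTriang_mor_zero₁₂ _ hT]

lemma exists_idempotent_hom {T : Triangle C} (hT : T ∈ distTriang C)
    (h₁ : Function.Bijective (fun f : T.obj₁ ⟶ T.obj₁ => f ≫ T.mor₁))
    (h₃ : Function.Injective (fun f : T.obj₃ ⟶ T.obj₃ => T.mor₂ ≫ f))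
    (e : T.obj₂ ⟶ T.obj₂) (he : e ≫ e = e) :
    ∃ φ : T ⟶ T, φ.hom₂ = e ∧ φ.hom₁ ≫ φ.hom₁ = φ.hom₁ ∧ φ.hom₃ ≫ φ.hom₃ = φ.hom₃ := by
  obtain ⟨e₁, he₁⟩ := h₁.2 (T.mor₁ ≫ e)
  dsimp only at he₁
  obtain ⟨e₃, he₃, he₃'⟩ := complete_distinguished_triangle_morphism _ _ hT hT e₁ e he₁.symm
  refine ⟨Triangle.homMk _ _ e₁ e e₃ he₁.symm he₃ he₃', rfl, h₁.1 ?_, h₃ ?_⟩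
  · simp [reassoc_of% he₁, he₁, he]
  · simp [reassoc_of% he₃, he₃, reassoc_of% he]

lemma exists_splitting_of_idempotent_hom {T : Triangle C} (hT : T ∈ distTriang C) (φ : T ⟶ T)
    (he : φ.hom₂ ≫ φ.hom₂ = φ.hom₂) {Y₁ Y₃ : C} {r₁ : T.obj₁ ⟶ Y₁} {s₁ : Y₁ ⟶ T.obj₁}
    (hrs₁ : r₁ ≫ s₁ = φ.hom₁) (hsr₁ : s₁ ≫ r₁ = 𝟙 Y₁) {r₃ : T.obj₃ ⟶ Y₃} {s₃ : Y₃ ⟶ T.obj₃}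
    (hrs₃ : r₃ ≫ s₃ = φ.hom₃) (hsr₃ : s₃ ≫ r₃ = 𝟙 Y₃) {Y : C} {v : Y₁ ⟶ Y} {u : Y ⟶ Y₃}
    (hY : Triangle.mk v u (s₃ ≫ T.mor₃ ≫ r₁⟦(1 : ℤ)⟧') ∈ distTriang C) :
    ∃ (r : T.obj₂ ⟶ Y) (s : Y ⟶ T.obj₂), r ≫ s = φ.hom₂ ∧ s ≫ r = 𝟙 Y := by
  have hr₁ : φ.hom₁ ≫ r₁ = r₁ := by rw [← hrs₁, assoc, hsr₁, comp_id]
  have hs₁ : s₁ ≫ φ.hom₁ = s₁ := by rw [← hrs₁, reassoc_of% hsr₁]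
  have hs₃ : s₃ ≫ φ.hom₃ = s₃ := by rw [← hrs₃, reassoc_of% hsr₃]
  have hs_comm : (s₃ ≫ T.mor₃ ≫ r₁⟦1⟧') ≫ s₁⟦1⟧' = s₃ ≫ T.mor₃ := by
    rw [assoc, assoc, ← Functor.map_comp, hrs₁, φ.comm₃, reassoc_of% hs₃]
  have hr_comm : T.mor₃ ≫ r₁⟦1⟧' = r₃ ≫ s₃ ≫ T.mor₃ ≫ r₁⟦1⟧' := by
    rw [reassoc_of% hrs₃, ← φ.comm₃_assoc, ← Functor.map_comp, hr₁]
  obtain ⟨s, hsv, hsu⟩ : ∃ s : Y ⟶ T.obj₂, v ≫ s = s₁ ≫ T.mor₁ ∧ u ≫ s₃ = s ≫ T.mor₂ :=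
    complete_distinguished_triangle_morphism₂ _ T hY hT s₁ s₃ hs_comm
  obtain ⟨r, hrv, hru⟩ : ∃ r : T.obj₂ ⟶ Y, T.mor₁ ≫ r = r₁ ≫ v ∧ T.mor₂ ≫ r₃ = r ≫ u :=
    complete_distinguished_triangle_morphism₂ T _ hT hY r₁ r₃ hr_comm
  have hvx : v ≫ s ≫ φ.hom₂ ≫ r = v := by
    simp [reassoc_of% hsv, hrv, reassoc_of% hs₁, reassoc_of% hsr₁]
  have hxu : (s ≫ φ.hom₂ ≫ r) ≫ u = u := by
    rw [assoc, assoc, ← hru, ← φ.comm₂_assoc, ← reassoc_of% hsu, reassoc_of% hs₃, hsr₃, comp_id]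
  generalize hx : s ≫ φ.hom₂ ≫ r = x at hvx hxu
  have : IsIso x := isIso_of_mor₁_comp_eq_of_comp_mor₂_eq hY hvx hxu
  have hv : v ≫ inv x = v := (hvx =≫ inv x).symm.trans (by simp)
  have hu : inv x ≫ u = u := (inv x ≫= hxu).symm.trans (by simp)
  have hsr : (s ≫ φ.hom₂) ≫ φ.hom₂ ≫ r ≫ inv x = 𝟙 Y := by
    rw [assoc, reassoc_of% he, reassoc_of% hx, IsIso.hom_inv_id]
  refine ⟨φ.hom₂ ≫ r ≫ inv x, s ≫ φ.hom₂,
    idempotent_eq_of_mor₁_comp_eq_of_comp_mor₂_eq hT he ?_ ?_ ?_ ?_ ?_, hsr⟩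
  · simp [reassoc_of% hsr]
  · simp [reassoc_of% he]
  · simp [he]
  · simp only [assoc]
    rw [φ.comm₁_assoc, reassoc_of% hrv, reassoc_of% hv, reassoc_of% hsv, reassoc_of% hr₁,
      reassoc_of% hrs₁, ← φ.comm₁_assoc, he]
  · simp only [assoc]
    rw [← φ.comm₂, ← reassoc_of% hsu, reassoc_of% hu, hs₃, ← reassoc_of% hru, hrs₃, φ.comm₂,
      reassoc_of% he]

end CategoryTheory.Pretriangulated.Triangle

namespace CategoryTheory.ObjectProperty

section

variable (P : ObjectProperty C) [P.IsTriangulated]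

lemma trW_le_isColocal_leftOrthogonal : P.trW ≤ P.leftOrthogonal.isColocal :=
  (le_isColocal_iff _ _).2 (isColocal_trW P).ge

lemma trW_le_isLocal_rightOrthogonal : P.trW ≤ P.rightOrthogonal.isLocal :=
  (le_isLocal_iff _ _).2 (isLocal_trW P).ge

variable {P}

lemma isColocal_hom₃_of_trW {T T' : Triangle C} (φ : T ⟶ T') (hT : T ∈ distTriang C)
    (hT' : T' ∈ distTriang C) (h₁ : P.trW φ.hom₁) (h₂ : P.trW φ.hom₂) :
    P.leftOrthogonal.isColocal φ.hom₃ := fun X hX =>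
  have hbij {Y Z : C} {f : Y ⟶ Z} (hf : P.trW f) := P.trW_le_isColocal_leftOrthogonal _ hf X hX
  Triangle.bijective_comp_hom₃ φ hT hT' X (hbij h₁).2 (hbij h₂) (hbij (h₁.shift 1))
    (hbij (h₂.shift 1)).1

lemma isLocal_hom₃_of_trW {T T' : Triangle C} (φ : T ⟶ T') (hT : T ∈ distTriang C)
    (hT' : T' ∈ distTriang C) (h₁ : P.trW φ.hom₁) (h₂ : P.trW φ.hom₂) :
    P.rightOrthogonal.isLocal φ.hom₃ := fun X hX =>
  have hbij {Y Z : C} {f : Y ⟶ Z} (hf : P.trW f) := P.trW_le_isLocal_rightOrthogonal _ hf X hX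
  Triangle.bijective_hom₃_comp φ hT hT' X (hbij h₁).1 (hbij h₂) (hbij (h₁.shift 1))
    (hbij (h₂.shift 1)).2

end

section

variable {C₁ C₂ : ObjectProperty C}

lemma extensionProduct_of_isColocal_of_isLocal [C₁.IsTriangulated]
    (h : C₁ ≤ C₂.leftOrthogonal) {X Z₁ Z₂ : C} (hZ₁ : C₁ Z₁) (hZ₂ : C₂ Z₂) {j : Z₁ ⟶ X}
    (hj : C₂.leftOrthogonal.isColocal j) (hj' : C₂.leftOrthogonal.isColocal (j⟦(1 : ℤ)⟧'))
    {w : X ⟶ Z₂} (hw : C₁.rightOrthogonal.isLocal w) : extensionProduct C₁ C₂ X := by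
  obtain ⟨Q, k, l, hTQ⟩ := distinguished_cocone_triangle j
  have hQ : C₁.rightOrthogonal Q := fun Y y hY =>
    Triangle.eq_zero_of_surjective_comp_mor₁ hTQ (hj Y (h _ hY)).2 (hj' Y (h _ hY)).1 y
  obtain ⟨θ, rfl⟩ : ∃ θ : Q ⟶ Z₂, w = k ≫ θ := Triangle.yoneda_exact₂ _ hTQ w (h _ hZ₁ _ hZ₂)
  have hθ : C₁.rightOrthogonal.isLocal θ := MorphismProperty.of_precomp _ k θ
    (C₁.trW_le_isLocal_rightOrthogonal _ (trW.mk' C₁ hTQ hZ₁)) hw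
  have : IsIso θ := (isLocal_iff_isIso _ θ hQ fun _ f hY => h _ hY f hZ₂).1 hθ
  rw [← extensionProduct_isoClosure_right]
  exact ⟨Z₁, Q, j, k, l, hTQ, hZ₁, Z₂, hZ₂, ⟨asIso θ⟩⟩

lemma isTriangulatedClosed₃_extensionProduct [C₁.IsTriangulated] [C₂.IsTriangulated]
    (h : C₁ ≤ C₂.leftOrthogonal) :
    (extensionProduct C₁ C₂).IsTriangulatedClosed₃ := by
  refine .mk' fun T hT ⟨A₁, A₂, a, a', a'', hTA, hA₁, hA₂⟩ ⟨B₁, B₂, b, b', b'', hTB, hB₁, hB₂⟩ =>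
    ?_
  obtain ⟨f₁, hf₁⟩ := (C₂.trW_le_isColocal_leftOrthogonal _ (trW.mk C₂ hTB hB₂) A₁
    (h _ hA₁)).2 (a ≫ T.mor₁)
  obtain ⟨f₂, hf₂, hf₂'⟩ :=
    complete_distinguished_triangle_morphism _ _ hTA hTB f₁ T.mor₁ hf₁.symm
  obtain ⟨Z₁, hZ₁, g₁, k₁, hR₁⟩ := C₁.distinguished_cocone_triangle f₁ hA₁ hB₁
  obtain ⟨Z₂, hZ₂, g₂, k₂, hR₂⟩ := C₂.distinguished_cocone_triangle f₂ hA₂ hB₂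
  obtain ⟨j, hj, hj'⟩ := complete_distinguished_triangle_morphism _ _ hR₁ hT a b hf₁
  obtain ⟨w, hw, hw'⟩ := complete_distinguished_triangle_morphism _ _ hT hR₂ a' b' hf₂.symm
  let φ : Triangle.mk f₁ g₁ k₁ ⟶ T := Triangle.homMk _ _ a b j hf₁ hj hj'
  let ψ : T ⟶ Triangle.mk f₂ g₂ k₂ := Triangle.homMk _ _ a' b' w hf₂.symm hw hw'
  have ha : C₂.trW a := trW.mk C₂ hTA hA₂
  have hb : C₂.trW b := trW.mk C₂ hTB hB₂
  refine extensionProduct_of_isColocal_of_isLocal h hZ₁ hZ₂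
    (isColocal_hom₃_of_trW φ hR₁ hT ha hb)
    (isColocal_hom₃_of_trW ((shiftFunctor (Triangle C) (1 : ℤ)).map φ)
      (Triangle.shift_distinguished _ hR₁ 1) (Triangle.shift_distinguished _ hT 1)
      (ha.shift 1) (hb.shift 1))
    (isLocal_hom₃_of_trW ψ hT hR₂ (trW.mk' C₁ hTA hA₁) (trW.mk' C₁ hTB hB₁))

lemma isTriangulated_extensionProduct [C₁.IsTriangulated] [C₂.IsTriangulated]
    (h : C₁ ≤ C₂.leftOrthogonal) : (extensionProduct C₁ C₂).IsTriangulated :=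
  have := isTriangulatedClosed₃_extensionProduct h
  { exists_zero :=
      let ⟨Z, hZ, hZ₁⟩ := C₁.exists_prop_of_containsZero
      ⟨Z, hZ, le_extensionProduct_left C₂ Z hZ₁⟩
    toIsTriangulatedClosed₂ := .of_isTriangulatedClosed₃ }

lemma idemCompleteSub_extensionProduct [C₁.IsTriangulated] [C₂.IsTriangulated]
    (h : C₁ ≤ C₂.leftOrthogonal) (hic₁ : IdemCompleteSub C₁) (hic₂ : IdemCompleteSub C₂) :
    IdemCompleteSub (extensionProduct C₁ C₂) := by
  rintro X ⟨X₁, X₂, f, g, k, hT, hX₁, hX₂⟩ e he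
  obtain ⟨φ, rfl, he₁, he₂⟩ := Triangle.exists_idempotent_hom hT
    (C₂.trW_le_isColocal_leftOrthogonal _ (trW.mk C₂ hT hX₂) X₁ (h _ hX₁))
    (C₁.trW_le_isLocal_rightOrthogonal _ (trW.mk' C₁ hT hX₁) X₂ fun _ f hY => h _ hY f hX₂).1
    e he
  obtain ⟨Y₁, hY₁, r₁, s₁, hrs₁, hsr₁⟩ := hic₁ hX₁ φ.hom₁ he₁
  obtain ⟨Y₂, hY₂, r₂, s₂, hrs₂, hsr₂⟩ := hic₂ hX₂ φ.hom₃ he₂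
  obtain ⟨Y, v, u, hY⟩ := distinguished_cocone_triangle₂ (s₂ ≫ k ≫ r₁⟦(1 : ℤ)⟧')
  obtain ⟨r, s, hrs, hsr⟩ :=
    Triangle.exists_splitting_of_idempotent_hom hT φ he hrs₁ hsr₁ hrs₂ hsr₂ hY
  exact ⟨Y, ⟨Y₁, Y₂, v, u, _, hY, hY₁, hY₂⟩, r, s, hrs, hsr⟩

end

end CategoryTheory.ObjectProperty

lemma IsStableSub.isTriangulated {P : ObjectProperty C} (hP : IsStableSub P) :
    P.IsTriangulated :=
  have : P.IsClosedUnderIsomorphisms := ⟨fun e hX => hP.iso_closed e hX⟩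
  have : P.IsStableUnderShift ℤ := ⟨fun n => ⟨fun X hX => hP.shift_closed X n hX⟩⟩
  have : P.IsTriangulatedClosed₃ := .mk' fun T hT h₁ h₂ => hP.cone_closed T hT h₁ h₂
  { exists_zero := ⟨0, isZero_zero C, hP.zero_mem 0 (isZero_zero C)⟩
    toIsTriangulatedClosed₂ := .of_isTriangulatedClosed₃ }

lemma stableSpan_le {C₁ C₂ P : ObjectProperty C} [P.IsTriangulated]
    [P.IsClosedUnderIsomorphisms] (h₁ : C₁ ≤ P) (h₂ : C₂ ≤ P) : StableSpan C₁ C₂ ≤ P :=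
  fun _ hX => hX P h₁ h₂ (fun _ _ e hY => P.prop_of_iso e hY) (fun _ hY => P.prop_of_isZero hY)
    (fun Y n hY => P.le_shift n Y hY) (fun T hT h₁ h₂ => P.ext_of_isTriangulatedClosed₃ T hT h₁ h₂)

lemma extensionProduct_le_stableSpan (C₁ C₂ : ObjectProperty C) :
    extensionProduct C₁ C₂ ≤ StableSpan C₁ C₂ :=
  fun _ ⟨_, _, _, _, _, hT, hY, hZ⟩ _ h₁ h₂ _ _ hshift hcone =>
    hcone _ (inv_rot_of_distTriang _ hT) (hshift _ (-1) (h₂ _ hZ)) (h₁ _ hY)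

lemma stableSpan_eq_extensionProduct {C₁ C₂ : ObjectProperty C} [C₁.IsTriangulated]
    [C₂.IsTriangulated] (h : C₁ ≤ C₂.leftOrthogonal) :
    StableSpan C₁ C₂ = extensionProduct C₁ C₂ :=
  have := isTriangulated_extensionProduct h
  le_antisymm (stableSpan_le (le_extensionProduct_left C₂) (le_extensionProduct_right C₁))
    (extensionProduct_le_stableSpan C₁ C₂)

/-- If `C₁` and `C₂` are idempotent complete full stable subcategories of
a stable category `C` with `Hom(C₁, C₂) = 0` (in every shift), then the smallest full
stable subcategory `C° = ⟨C₁, C₂⟩` containing both is also idempotent complete. -/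
theorem stableSpan_idempotent_complete
    (C₁ C₂ : C → Prop) (h₁ : IsStableSub C₁) (h₂ : IsStableSub C₂)
    (horth : ∀ ⦃X Y : C⦄, C₁ X → C₂ Y → ∀ (n : ℤ) (f : X ⟶ Y⟦n⟧), f = 0)
    (hic₁ : IdemCompleteSub C₁) (hic₂ : IdemCompleteSub C₂) :
    IdemCompleteSub (StableSpan C₁ C₂) := by
  have := h₁.isTriangulated
  have := h₂.isTriangulated
  have h : C₁ ≤ leftOrthogonal C₂ := fun X hX Y f hY => by
    simpa using horth hX hY 0 (f ≫ (shiftFunctorZero C ℤ).inv.app Y)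
  rw [stableSpan_eq_extensionProduct h]
  exact idemCompleteSub_extensionProduct h hic₁ hic₂
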